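/- Let Sh denote the quotient of {±1} × A_f^× by the action of ℚ^× given by q·(ε, l) = (sign(q)·ε, q·l), with classes written [ε, l]. Let U^princ := {(g, ρ, ε) ∈ ℚ^× × Ẑ × {±1} : g·ρ ∈ Ẑ} with the action of {±1} × {±1} given by (γ₁, γ₂)·(g, ρ, ε) = (γ₁·g·γ₂⁻¹, γ₂·ρ, γ₂·ε), and let U := {(g, ρ, s) ∈ A_f^× × Ẑ × Sh : g·ρ ∈ Ẑ} with the action of Ẑ^× × Ẑ^× given by (γ₁, γ₂)·(g, ρ, [ε, l]) = (γ₁·g·γ₂⁻¹, γ₂·ρ, [ε, l·γ₂⁻¹]). Then the map (g, ρ, ε) ↦ (g, ρ, [ε, 1]) induces a bijection from the quotient ({±1} × {±1})\U^princ onto the quotient (Ẑ^× × Ẑ^×)\U. -/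

import Mathlib

/-! Since ℤ is a principal ideal domain, every finite idele is `q · γ` with `q ∈ ℚ^×` and
`γ ∈ Ẑ^×` (strong approximation for `𝔾_m`): a nonzero rational with prescribed valuations is a
product of powers of generators of the primes. Applying this to `l` and then to `g γ₂⁻¹` moves any
point `(g, ρ, [ε, l])` of `U` into the image of `U^princ`. Conversely, if `(γ₁, γ₂)` identifies the
images of two principal points, then `[ε', 1] = [ε, γ₂⁻¹]` makes `γ₂` diagonal, hence so is `γ₁`,
and `ℚ^× ∩ Ẑ^× = ℤ^× = {±1}` shows that both come from `{±1} × {±1}`. -/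

open IsDedekindDomain IsDedekindDomain.HeightOneSpectrum

noncomputable section

/-- The finite adele ring of ℚ. -/
abbrev Af : Type := FiniteAdeleRing ℤ ℚ

/-- A finite adele is integral if all its components are integral, i.e. it lies in Ẑ. -/
def IsIntegralAdele (x : Af) : Prop :=
  ∀ v : HeightOneSpectrum ℤ, x v ∈ v.adicCompletionIntegers ℚ

/-- Ẑ^×, the subgroup of A_f^× of ideles that are integral with integral inverse. -/
def zhatUnits : Subgroup Afˣ where
  carrier := {u | IsIntegralAdele (u : Af) ∧ IsIntegralAdele ((u⁻¹ : Afˣ) : Af)}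
  one_mem' := ⟨fun v => one_mem _, fun v => one_mem _⟩
  mul_mem' := by
    rintro a b ⟨ha, ha'⟩ ⟨hb, hb'⟩
    exact ⟨fun v => mul_mem (ha v) (hb v), by
      rw [mul_inv_rev]; exact fun v => mul_mem (hb' v) (ha' v)⟩
  inv_mem' := by
    rintro a ⟨ha, ha'⟩
    exact ⟨ha', by rw [inv_inv]; exact ha⟩

/-- The diagonal embedding of ℚ^× into the finite ideles. -/
def diagQ : ℚˣ →* Afˣ := Units.map (algebraMap ℚ Af).toMonoidHom

/-- The sign of a nonzero rational, as an element of {±1} = ℤˣ. -/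
def signQ (q : ℚˣ) : ℤˣ := if 0 < (q : ℚ) then 1 else -1

/-- The action of ℚ^× on {±1} × A_f^×: q·(ε, l) = (sign(q)·ε, q·l). -/
def relSh : (ℤˣ × Afˣ) → (ℤˣ × Afˣ) → Prop := fun p p' =>
  ∃ q : ℚˣ, p'.1 = signQ q * p.1 ∧ p'.2 = diagQ q * p.2

/-- Sh(𝔾_m, {±1}) = ℚ^×\({±1} × A_f^×). -/
def Sh : Type := Quot relSh

/-- Right multiplication by an idele on Sh(𝔾_m, {±1}). -/
def shMul (c : Afˣ) : Sh → Sh :=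
  Quot.lift (fun p => Quot.mk relSh (p.1, p.2 * c))
    (by
      rintro ⟨ε, l⟩ ⟨ε', l'⟩ ⟨q, h1, h2⟩
      exact Quot.sound ⟨q, h1, by rw [h2, mul_assoc]⟩)

/-- U^princ: triples (g, ρ, ε) ∈ ℚ^× × Ẑ × {±1} with g·ρ ∈ Ẑ. -/
def UPrinc : Type :=
  {t : ℚ × Af × ℤˣ //
    t.1 ≠ 0 ∧ IsIntegralAdele t.2.1 ∧ IsIntegralAdele (algebraMap ℚ Af t.1 * t.2.1)}

/-- The action of {±1} × {±1} on U^princ. -/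
def relPrinc : UPrinc → UPrinc → Prop := fun u u' => ∃ γ₁ γ₂ : ℤˣ,
  u'.1.1 = ((γ₁ : ℤ) : ℚ) * u.1.1 * (((γ₂ : ℤ) : ℚ))⁻¹ ∧
  u'.1.2.1 = algebraMap ℚ Af ((γ₂ : ℤ) : ℚ) * u.1.2.1 ∧
  u'.1.2.2 = γ₂ * u.1.2.2

/-- U: triples (g, ρ, s) ∈ A_f^× × Ẑ × Sh with g·ρ ∈ Ẑ. -/
def UFull : Type :=
  {t : Afˣ × Af × Sh // IsIntegralAdele t.2.1 ∧ IsIntegralAdele ((t.1 : Af) * t.2.1)}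

/-- The action of Ẑ^× × Ẑ^× on U:
(γ₁, γ₂)·(g, ρ, [ε, l]) = (γ₁·g·γ₂⁻¹, γ₂·ρ, [ε, l·γ₂⁻¹]). -/
def relFull : UFull → UFull → Prop := fun u u' => ∃ γ₁ γ₂ : zhatUnits,
  u'.1.1 = (γ₁ : Afˣ) * u.1.1 * ((γ₂ : Afˣ))⁻¹ ∧
  u'.1.2.1 = ((γ₂ : Afˣ) : Af) * u.1.2.1 ∧
  u'.1.2.2 = shMul ((γ₂ : Afˣ)⁻¹) u.1.2.2

/-- The map (g, ρ, ε) ↦ (g, ρ, [ε, 1]) from U^princ to U. -/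
def embed (u : UPrinc) : UFull :=
  ⟨(diagQ (Units.mk0 u.1.1 u.2.1), u.1.2.1, Quot.mk relSh (u.1.2.2, 1)),
    u.2.2.1, u.2.2.2⟩

namespace IsDedekindDomain

theorem HeightOneSpectrum.generator_ne_zero {R : Type*} [CommRing R] [IsPrincipalIdealRing R]
    (v : HeightOneSpectrum R) : Submodule.IsPrincipal.generator v.asIdeal ≠ 0 :=
  fun h => v.ne_bot ((Submodule.IsPrincipal.eq_bot_iff_generator_eq_zero _).mpr h)

variable {R : Type*} [CommRing R] [IsDedekindDomain R] {K : Type*} [Field K] [Algebra R K]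
  [IsFractionRing R K]

namespace HeightOneSpectrum

theorem forall_valuation_eq_one_iff_exists_units {k : K} (hk0 : k ≠ 0) :
    (∀ v : HeightOneSpectrum R, v.valuation K k = 1) ↔ ∃ r : Rˣ, algebraMap R K r = k := by
  constructor
  · intro hk
    obtain ⟨a, ha⟩ := mem_integers_of_valuation_le_one K k fun v => (hk v).le
    obtain ⟨b, hb⟩ := mem_integers_of_valuation_le_one K k⁻¹ fun v => by
      rw [map_inv₀, hk v, inv_one]
    have hab : a * b = 1 := IsFractionRing.injective R K <| by
      rw [map_mul, ha, hb, mul_inv_cancel₀ hk0, map_one]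
    exact ⟨⟨a, b, hab, by rw [mul_comm, hab]⟩, ha⟩
  · rintro ⟨r, rfl⟩ v
    exact (valuation_eq_one_iff_notMem (K := K) v).mpr fun hr =>
      v.isPrime.ne_top (Ideal.eq_top_of_isUnit_mem _ hr r.isUnit)

variable [IsPrincipalIdealRing R]

open Classical in
theorem valuation_generator (v w : HeightOneSpectrum R) :
    w.valuation K (algebraMap R K (Submodule.IsPrincipal.generator v.asIdeal)) =
      if v = w then WithZero.exp (-1) else 1 := by
  rw [valuation_of_algebraMap]
  split_ifs with hvw
  · subst hvw
    exact intValuation_singleton v (generator_ne_zero v) (Ideal.span_singleton_generator _).symm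
  · refine intValuation_eq_one_iff.mpr fun hmem => hvw ?_
    have hle : v.asIdeal ≤ w.asIdeal := by
      rw [← Ideal.span_singleton_generator v.asIdeal, Ideal.span_le, Set.singleton_subset_iff]
      exact hmem
    exact HeightOneSpectrum.ext (v.isMaximal.eq_of_le w.isMaximal.ne_top hle)

theorem exists_valuation_eq_exp {n : HeightOneSpectrum R → ℤ} (hn : n.support.Finite) :
    ∃ k : Kˣ, ∀ v, v.valuation K k = WithZero.exp (n v) := by
  classical
  let π : HeightOneSpectrum R → K := fun v =>
    algebraMap R K (Submodule.IsPrincipal.generator v.asIdeal)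
  have hπ : ∀ v, π v ≠ 0 := fun v =>
    (map_ne_zero_iff _ (IsFractionRing.injective R K)).mpr (generator_ne_zero v)
  refine ⟨Units.mk0 (∏ v ∈ hn.toFinset, π v ^ (-n v))
    (Finset.prod_ne_zero_iff.mpr fun v _ => zpow_ne_zero _ (hπ v)), fun w => ?_⟩
  simp_rw [Units.val_mk0, map_prod, map_zpow₀, π, valuation_generator, ite_pow, one_zpow,
    Finset.prod_ite_eq', Set.Finite.mem_toFinset, Function.mem_support]
  split_ifs with hw
  · rw [← WithZero.exp_zsmul]
    congr 1
    simp
  · rw [not_not.mp hw, WithZero.exp_zero]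

end HeightOneSpectrum

namespace FiniteAdeleRing

theorem valued_algebraMap_apply (k : K) (v : HeightOneSpectrum R) :
    Valued.v ((algebraMap K (FiniteAdeleRing R K) k) v) = v.valuation K k :=
  valuedAdicCompletion_eq_valuation' v k

theorem valued_units_mul_valued_inv (x : (FiniteAdeleRing R K)ˣ) (v : HeightOneSpectrum R) :
    Valued.v ((x : FiniteAdeleRing R K) v) *
      Valued.v (((x⁻¹ : (FiniteAdeleRing R K)ˣ) : FiniteAdeleRing R K) v) = 1 := by
  rw [← Valuation.map_mul]
  change Valued.v (((x * x⁻¹ : (FiniteAdeleRing R K)ˣ) : FiniteAdeleRing R K) v) = 1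
  rw [mul_inv_cancel, Units.val_one]
  exact Valuation.map_one _

theorem valued_units_ne_zero (x : (FiniteAdeleRing R K)ˣ) (v : HeightOneSpectrum R) :
    Valued.v ((x : FiniteAdeleRing R K) v) ≠ 0 :=
  left_ne_zero_of_mul_eq_one (valued_units_mul_valued_inv x v)

theorem exists_valued_eq_valuation [IsPrincipalIdealRing R] (x : (FiniteAdeleRing R K)ˣ) :
    ∃ k : Kˣ, ∀ v, Valued.v ((x : FiniteAdeleRing R K) v) = v.valuation K k := by
  have hfin :
      (fun v => WithZero.log (Valued.v ((x : FiniteAdeleRing R K) v))).support.Finite := by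
    refine (unitsEquiv_finite_valued_eq_one x).subset fun v hv h => hv ?_
    change Valued.v ((x : FiniteAdeleRing R K) v) = 1 at h
    simp only [h, WithZero.log_one]
  obtain ⟨k, hk⟩ := exists_valuation_eq_exp (K := K) hfin
  exact ⟨k, fun v => by rw [hk, WithZero.exp_log (valued_units_ne_zero x v)]⟩

end FiniteAdeleRing

end IsDedekindDomain

theorem isIntegralAdele_iff (x : Af) : IsIntegralAdele x ↔ ∀ v, Valued.v (x v) ≤ 1 :=
  forall_congr' fun v => mem_adicCompletionIntegers ℤ ℚ v

theorem IsIntegralAdele.mul {x y : Af} (hx : IsIntegralAdele x) (hy : IsIntegralAdele y) :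
    IsIntegralAdele (x * y) :=
  fun v => mul_mem (hx v) (hy v)

theorem mem_zhatUnits_iff (u : Afˣ) : u ∈ zhatUnits ↔ ∀ v, Valued.v ((u : Af) v) = 1 := by
  have hmul := FiniteAdeleRing.valued_units_mul_valued_inv u
  simp only [zhatUnits, Subgroup.mem_mk, Submonoid.mem_mk, Subsemigroup.mem_mk, Set.mem_ofPred_eq,
    isIntegralAdele_iff]
  constructor
  · rintro ⟨hu, hinv⟩ v
    refine le_antisymm (hu v) ?_
    simpa [hmul v] using mul_le_mul_right (hinv v) (Valued.v ((u : Af) v))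
  · intro hu
    refine ⟨fun v => (hu v).le, fun v => ?_⟩
    simpa [hu v] using (hmul v).le

theorem diagQ_coe (q : ℚˣ) : ((diagQ q : Afˣ) : Af) = algebraMap ℚ Af q := rfl

theorem diagQ_mem_zhatUnits_iff (q : ℚˣ) :
    diagQ q ∈ zhatUnits ↔ ∃ δ : ℤˣ, ((δ : ℤ) : ℚ) = q := by
  simp only [mem_zhatUnits_iff, diagQ_coe, FiniteAdeleRing.valued_algebraMap_apply,
    forall_valuation_eq_one_iff_exists_units q.ne_zero, algebraMap_int_eq, eq_intCast]

theorem exists_eq_diagQ_mul_mem_zhatUnits (x : Afˣ) :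
    ∃ q : ℚˣ, ∃ γ ∈ zhatUnits, x = diagQ q * γ := by
  obtain ⟨q, hq⟩ := FiniteAdeleRing.exists_valued_eq_valuation x
  refine ⟨q, (diagQ q)⁻¹ * x, (mem_zhatUnits_iff _).mpr fun v => ?_,
    (mul_inv_cancel_left _ _).symm⟩
  rw [← map_inv, Units.val_mul, diagQ_coe]
  change Valued.v ((algebraMap ℚ Af _) v * (x : Af) v) = 1
  rw [Valuation.map_mul, FiniteAdeleRing.valued_algebraMap_apply, hq, Units.val_inv_eq_inv_val,
    map_inv₀, inv_mul_cancel₀ ((Valuation.ne_zero_iff _).mpr q.ne_zero)]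

theorem signQ_mul (a b : ℚˣ) : signQ (a * b) = signQ a * signQ b := by
  rcases (Units.ne_zero a).lt_or_gt with ha | ha <;>
    rcases (Units.ne_zero b).lt_or_gt with hb | hb <;>
    simp [signQ, ha, hb, ha.not_gt, hb.not_gt, mul_pos_iff]

theorem signQ_eq_of_coe_eq {q : ℚˣ} {δ : ℤˣ} (h : (q : ℚ) = δ) : signQ q = δ := by
  rcases Int.units_eq_one_or δ with rfl | rfl <;> simp [signQ, h]

theorem relSh_equivalence : Equivalence relSh where
  refl _ := ⟨1, by simp [signQ], by simp⟩
  symm := by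
    rintro _ _ ⟨q, h1, h2⟩
    refine ⟨q⁻¹, ?_, by rw [h2, map_inv, inv_mul_cancel_left]⟩
    rw [h1, ← mul_assoc, ← signQ_mul, inv_mul_cancel]
    simp [signQ]
  trans := by
    rintro _ _ _ ⟨q, h1, h2⟩ ⟨q', h1', h2'⟩
    exact ⟨q' * q, by rw [signQ_mul, h1', h1, mul_assoc], by rw [map_mul, h2', h2, mul_assoc]⟩

theorem mk_relSh_eq_mk_iff {p p' : ℤˣ × Afˣ} : Quot.mk relSh p = Quot.mk relSh p' ↔ relSh p p' :=
  Quot.eq.trans relSh_equivalence.eqvGen_iff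

theorem shMul_mk (c : Afˣ) (p : ℤˣ × Afˣ) :
    shMul c (Quot.mk relSh p) = Quot.mk relSh (p.1, p.2 * c) := rfl

theorem shMul_shMul (c d : Afˣ) (s : Sh) : shMul d (shMul c s) = shMul (c * d) s := by
  induction s using Quot.ind
  simp only [shMul_mk, mul_assoc]
  rfl

theorem shMul_one (s : Sh) : shMul 1 s = s := by
  induction s using Quot.ind
  simp only [shMul_mk, mul_one]
  rfl

theorem relFull_equivalence : Equivalence relFull where
  refl _ := ⟨1, 1, by simp, by simp, by simp [shMul_one]⟩
  symm := by
    rintro _ _ ⟨γ₁, γ₂, h1, h2, h3⟩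
    refine ⟨γ₁⁻¹, γ₂⁻¹, ?_, ?_, ?_⟩
    · rw [h1]; simp only [InvMemClass.coe_inv]; group
    · rw [h2, InvMemClass.coe_inv, ← mul_assoc, ← Units.val_mul, inv_mul_cancel, Units.val_one,
        one_mul]
    · rw [h3, shMul_shMul, InvMemClass.coe_inv, inv_inv, inv_mul_cancel, shMul_one]
  trans := by
    rintro _ _ _ ⟨γ₁, γ₂, h1, h2, h3⟩ ⟨δ₁, δ₂, h1', h2', h3'⟩
    refine ⟨δ₁ * γ₁, δ₂ * γ₂, ?_, ?_, ?_⟩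
    · rw [h1', h1]; simp only [MulMemClass.coe_mul]; group
    · rw [h2', h2, MulMemClass.coe_mul, Units.val_mul, mul_assoc]
    · rw [h3', h3, shMul_shMul, MulMemClass.coe_mul, mul_inv_rev]

theorem relFull_embed_of_relPrinc {u u' : UPrinc} (h : relPrinc u u') :
    relFull (embed u) (embed u') := by
  obtain ⟨γ₁, γ₂, h1, h2, h3⟩ := h
  obtain ⟨q₁, hq₁⟩ : ∃ q : ℚˣ, (q : ℚ) = γ₁ := ⟨Units.map (Int.castRingHom ℚ).toMonoidHom γ₁, rfl⟩
  obtain ⟨q₂, hq₂⟩ : ∃ q : ℚˣ, (q : ℚ) = γ₂ := ⟨Units.map (Int.castRingHom ℚ).toMonoidHom γ₂, rfl⟩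
  refine ⟨⟨diagQ q₁, (diagQ_mem_zhatUnits_iff _).mpr ⟨γ₁, hq₁.symm⟩⟩,
    ⟨diagQ q₂, (diagQ_mem_zhatUnits_iff _).mpr ⟨γ₂, hq₂.symm⟩⟩, ?_, ?_, ?_⟩
  · change diagQ _ = diagQ q₁ * diagQ _ * (diagQ q₂)⁻¹
    rw [← map_inv, ← map_mul, ← map_mul]
    congr 1
    ext
    simp [h1, hq₁, hq₂]
  · change u'.1.2.1 = algebraMap ℚ Af q₂ * u.1.2.1
    rw [hq₂, h2]
  · change Quot.mk relSh (u'.1.2.2, 1) = Quot.mk relSh (u.1.2.2, 1 * (diagQ q₂)⁻¹)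
    exact mk_relSh_eq_mk_iff.mpr (relSh_equivalence.symm
      ⟨q₂, by rw [h3, signQ_eq_of_coe_eq hq₂], by rw [one_mul, mul_inv_cancel]⟩)

theorem relPrinc_of_relFull_embed {u u' : UPrinc} (h : relFull (embed u) (embed u')) :
    relPrinc u u' := by
  obtain ⟨γ₁, γ₂, h1, h2, h3⟩ := h
  set g := Units.mk0 u.1.1 u.2.1
  set g' := Units.mk0 u'.1.1 u'.2.1
  change diagQ g' = γ₁ * diagQ g * (γ₂ : Afˣ)⁻¹ at h1
  change u'.1.2.1 = ((γ₂ : Afˣ) : Af) * u.1.2.1 at h2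
  change Quot.mk relSh (u'.1.2.2, 1) = Quot.mk relSh (u.1.2.2, 1 * (γ₂ : Afˣ)⁻¹) at h3
  obtain ⟨p, hε, hp⟩ := relSh_equivalence.symm (mk_relSh_eq_mk_iff.mp h3)
  change u'.1.2.2 = signQ p * u.1.2.2 at hε
  replace hp : (γ₂ : Afˣ) = diagQ p := by simpa [eq_mul_inv_iff_mul_eq, eq_comm] using hp
  have hγ₁ : (γ₁ : Afˣ) = diagQ (g' * p * g⁻¹) := by
    rw [map_mul, map_mul, map_inv, ← hp, h1]
    group
  obtain ⟨δ₁, hδ₁⟩ := (diagQ_mem_zhatUnits_iff _).mp (hγ₁ ▸ γ₁.2)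
  obtain ⟨δ₂, hδ₂⟩ := (diagQ_mem_zhatUnits_iff _).mp (hp ▸ γ₂.2)
  refine ⟨δ₁, δ₂, ?_, ?_, ?_⟩
  · have hg : u.1.1 ≠ 0 := u.2.1
    simp only [hδ₁, hδ₂, g, g', Units.val_mul, Units.val_inv_eq_inv_val, Units.val_mk0]
    field_simp
  · rw [h2, hp, diagQ_coe, hδ₂]
  · rw [hε, signQ_eq_of_coe_eq hδ₂.symm]

theorem exists_relFull_embed (w : UFull) : ∃ t : UPrinc, relFull w (embed t) := by
  obtain ⟨⟨g, ρ, s⟩, hρ, hgρ⟩ := w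
  obtain ⟨⟨ε, l⟩, rfl⟩ := Quot.exists_rep s
  obtain ⟨q₂, γ₂, hγ₂, hl⟩ := exists_eq_diagQ_mul_mem_zhatUnits l
  obtain ⟨q₁, γ₁, hγ₁, hg⟩ := exists_eq_diagQ_mul_mem_zhatUnits (g * γ₂⁻¹)
  have hq₁ : diagQ q₁ = γ₁⁻¹ * g * γ₂⁻¹ := by
    rw [mul_assoc, mul_comm, eq_mul_inv_iff_mul_eq, hg]
  have hq₁ρ : algebraMap ℚ Af q₁ * ((γ₂ : Af) * ρ) = ((γ₁⁻¹ : Afˣ) : Af) * ((g : Af) * ρ) := by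
    rw [← diagQ_coe, hq₁, Units.val_mul, Units.val_mul, mul_assoc _ _ ((γ₂ : Af) * ρ),
      Units.inv_mul_cancel_left, mul_assoc]
  refine ⟨⟨(q₁, (γ₂ : Af) * ρ, signQ q₂⁻¹ * ε), q₁.ne_zero, hγ₂.1.mul hρ, ?_⟩,
    ⟨γ₁⁻¹, inv_mem hγ₁⟩, ⟨γ₂, hγ₂⟩, ?_, rfl, ?_⟩
  · rw [hq₁ρ]
    exact (inv_mem hγ₁).1.mul hgρ
  · change diagQ (Units.mk0 _ _) = _
    rw [Units.mk0_val, hq₁]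
  · change Quot.mk relSh (signQ q₂⁻¹ * ε, 1) = Quot.mk relSh (ε, l * γ₂⁻¹)
    exact (Quot.sound ⟨q₂⁻¹, rfl, by rw [hl, mul_inv_cancel_right, map_inv, inv_mul_cancel]⟩).symm

/-- The map (g, ρ, ε) ↦ (g, ρ, [ε, 1]) induces a bijection
({±1} × {±1})\U^princ ≅ (Ẑ^× × Ẑ^×)\U. -/
theorem quotient_UPrinc_equiv_quotient_UFull :
    ∃ ψ : Quot relPrinc → Quot relFull,
      Function.Bijective ψ ∧
      ∀ u : UPrinc, ψ (Quot.mk relPrinc u) = Quot.mk relFull (embed u) := by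
  refine ⟨Quot.lift (fun u => Quot.mk relFull (embed u))
    fun _ _ h => Quot.sound (relFull_embed_of_relPrinc h), ⟨?_, ?_⟩, fun _ => rfl⟩
  · rintro ⟨u⟩ ⟨u'⟩ h
    exact Quot.sound
      (relPrinc_of_relFull_embed (relFull_equivalence.eqvGen_iff.mp (Quot.eqvGen_exact h)))
  · rintro ⟨w⟩
    obtain ⟨t, ht⟩ := exists_relFull_embed w
    exact ⟨Quot.mk relPrinc t, (Quot.sound ht).symm⟩
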